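/- arXiv:hep-th/9706120 — 2 statements merged into one kernel-verified Lean document; each statement's English description precedes it below -/
import Mathlib

section
/- For 0 < x < 1 and every natural number j, the function S_j(x) = Σ_{k=1}^∞ ((j+k+1)!/(k+1)!) σ_k x^k satisfies (1-x)^{j+1} S_j(x) = P_j(x) + Q_j(x) log(1-x), where P_j(x)/(j+1)! = (j x / 2)(1-x)^{j-1} + (j(j-1)/4) x^2 (1-x)^{j-2} + Σ_{p=3}^{j} (j!/((p+1)! (j-p)!)) [1/p + 1/(p-1) + Σ_{q=1}^{p-2} 1/(p-q-1)] x^p (1-x)^{j-p}, and x Q_j(x)/(j+1)! = -(1/(j+1)) [1 - (1-x)^{j+1}]. -/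
/-!
Write `L = log (1 - x)` and `T_r(x) = ∑ₖ C(k, r) σₖ xᵏ`. Multiplying a power series by `1 - x`
takes differences of its coefficients, and
`C(k+1, r+1) σₖ₊₁ - C(k, r+1) σₖ = C(k, r) σₖ + C(k, r) / (r + 1)`; hence
`(1 - x) T_{r+1} = x T_r + x^{r+1} / ((r + 1) (1 - x)^{r+1})`, which together with
`(1 - x) T_0 = -L` gives `T_r = x^r (σ_r - L) / (1 - x)^{r+1}`.
Vandermonde's identity `(j+k+1)!/(k+1)! = j! ∑_r C(j+1, r+1) C(k, r)` then yields
`(1 - x)^{j+1} S_j = ∑_r j! C(j+1, r+1) x^r (1 - x)^{j-r} (σ_r - L)`. The `σ_r`-part of this sum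
is `P_j`, whose bracket is `σ_p`, and the `L`-part is `Q_j L` by the binomial theorem.
-/

open Finset

/-- The k-th harmonic number σ_k = Σ_{m=1}^k 1/m. -/
noncomputable def sigma_harm (k : ℕ) : ℝ := ∑ m ∈ Finset.Icc 1 k, (1 : ℝ) / m

/-- The polynomial P_j(x) of Theorem 4:
P_j(x)/(j+1)! = (jx/2)(1-x)^{j-1} + (j(j-1)/4)x²(1-x)^{j-2}
  + Σ_{p=3}^j (j!/((p+1)!(j-p)!)) [1/p + 1/(p-1) + Σ_{q=1}^{p-2} 1/(p-q-1)] x^p (1-x)^{j-p}. -/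
noncomputable def Ppoly (j : ℕ) (x : ℝ) : ℝ :=
  (Nat.factorial (j + 1) : ℝ) *
    ((j : ℝ) * x / 2 * (1 - x) ^ (j - 1)
      + (j : ℝ) * ((j : ℝ) - 1) / 4 * x ^ 2 * (1 - x) ^ (j - 2)
      + ∑ p ∈ Finset.Icc 3 j,
          (Nat.factorial j : ℝ) / ((Nat.factorial (p + 1)) * (Nat.factorial (j - p))) *
            (1 / (p : ℝ) + 1 / ((p : ℝ) - 1) + ∑ q ∈ Finset.Icc 1 (p - 2), 1 / ((p : ℝ) - q - 1)) *
            x ^ p * (1 - x) ^ (j - p))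

/-- The polynomial Q_j(x) of Theorem 4: x Q_j(x)/(j+1)! = -(1/(j+1))[1-(1-x)^{j+1}]. -/
noncomputable def Qpoly (j : ℕ) (x : ℝ) : ℝ :=
  (Nat.factorial (j + 1) : ℝ) * (-(1 / ((j : ℝ) + 1)) * (1 - (1 - x) ^ (j + 1))) / x

open Real

theorem hasSum_of_hasSum_coeff_sub {𝕜 : Type*} [Field 𝕜] [TopologicalSpace 𝕜] [IsTopologicalRing 𝕜]
    [T2Space 𝕜] {c : ℕ → 𝕜} {x V : 𝕜} (hx : x ≠ 1) (hs : Summable fun k => c k * x ^ k)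
    (hV : HasSum (fun k => (c (k + 1) - c k) * x ^ (k + 1)) V) :
    HasSum (fun k => c k * x ^ k) ((V + c 0) / (1 - x)) := by
  obtain ⟨S, hS⟩ := hs
  have hdiff : HasSum (fun k => (c (k + 1) - c k) * x ^ (k + 1)) ((1 - x) * S - c 0) := by
    have h := ((hasSum_nat_add_iff' 1).mpr hS).sub (hS.mul_left x)
    have e : (fun k => c (k + 1) * x ^ (k + 1) - x * (c k * x ^ k))
        = fun k => (c (k + 1) - c k) * x ^ (k + 1) := funext fun k => by ring
    rwa [sum_range_one, pow_zero, mul_one, sub_right_comm, ← one_sub_mul, e] at h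
  rw [hV.unique hdiff, sub_add_cancel, mul_div_cancel_left₀ _ (sub_ne_zero.2 hx.symm)]
  exact hS

theorem sigma_harm_zero : sigma_harm 0 = 0 := by simp [sigma_harm]

theorem sigma_harm_succ (k : ℕ) : sigma_harm (k + 1) = sigma_harm k + 1 / (k + 1 : ℝ) := by
  rw [sigma_harm, sigma_harm, sum_Icc_succ_top (by omega)]
  push_cast
  ring

theorem sigma_harm_nonneg (k : ℕ) : 0 ≤ sigma_harm k :=
  sum_nonneg fun m _ => by positivity

theorem sigma_harm_le (k : ℕ) : sigma_harm k ≤ k := by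
  calc sigma_harm k ≤ ∑ m ∈ Icc 1 k, (1 : ℝ) :=
        sum_le_sum fun m hm =>
          div_le_one_of_le₀ (by exact_mod_cast (mem_Icc.1 hm).1) (by positivity)
    _ = k := by simp

theorem sum_Icc_one_div_reflect (n : ℕ) :
    ∑ q ∈ Icc 1 n, 1 / ((n : ℝ) + 1 - q) = sigma_harm n := by
  have h := sum_Ico_reflect (fun m : ℕ => 1 / (m : ℝ)) 1 (Nat.le_succ (n + 1))
  simp only [Nat.add_sub_cancel_left, Nat.add_sub_cancel] at h
  rw [sigma_harm, ← Finset.Ico_add_one_right_eq_Icc, ← h]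
  refine sum_congr rfl fun q hq => ?_
  rw [Nat.cast_sub (by linarith [(mem_Ico.1 hq).2])]
  push_cast
  ring

theorem one_div_add_one_div_add_sum_eq_sigma_harm {p : ℕ} (hp : 2 ≤ p) :
    1 / (p : ℝ) + 1 / ((p : ℝ) - 1) + ∑ q ∈ Icc 1 (p - 2), 1 / ((p : ℝ) - q - 1)
      = sigma_harm p := by
  obtain ⟨n, rfl⟩ : ∃ n, p = n + 2 := ⟨p - 2, by omega⟩
  rw [Nat.add_sub_cancel, sigma_harm_succ, sigma_harm_succ, ← sum_Icc_one_div_reflect n]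
  push_cast
  ring_nf

theorem hasSum_choose_mul_pow {x : ℝ} (hx : |x| < 1) (r : ℕ) :
    HasSum (fun k => (k.choose r : ℝ) * x ^ k) (x ^ r / (1 - x) ^ (r + 1)) := by
  have h := (hasSum_choose_mul_geometric_of_norm_lt_one r (r := x) (by rwa [norm_eq_abs])).mul_left
    (x ^ r)
  have hzero : ∑ k ∈ range r, (k.choose r : ℝ) * x ^ k = 0 :=
    sum_eq_zero fun k hk => by rw [Nat.choose_eq_zero_of_lt (mem_range.1 hk)]; simp
  have e : (fun n => x ^ r * ((n + r).choose r * x ^ n))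
      = fun n => ((n + r).choose r : ℝ) * x ^ (n + r) :=
    funext fun n => by ring
  rw [e, mul_one_div, ← sub_zero (_ / _), ← hzero] at h
  exact (hasSum_nat_add_iff' r).mp h

theorem summable_choose_mul_sigma_harm_mul_pow {x : ℝ} (hx : |x| < 1) (r : ℕ) :
    Summable fun k => (k.choose r : ℝ) * sigma_harm k * x ^ k := by
  refine .of_norm_bounded (summable_pow_mul_geometric_of_norm_lt_one (r + 1) (r := |x|)
    (by rwa [norm_eq_abs, abs_abs])) fun k => ?_
  have hchoose : (k.choose r : ℝ) ≤ (k : ℝ) ^ r := by exact_mod_cast Nat.choose_le_pow k r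
  calc ‖(k.choose r : ℝ) * sigma_harm k * x ^ k‖ = k.choose r * sigma_harm k * |x| ^ k := by
        rw [norm_mul, norm_mul, norm_pow, norm_eq_abs, norm_eq_abs, norm_eq_abs,
          abs_of_nonneg (sigma_harm_nonneg k), Nat.abs_cast]
    _ ≤ (k : ℝ) ^ r * k * |x| ^ k := by
        gcongr
        · exact sigma_harm_nonneg k
        · exact sigma_harm_le k
    _ = (k : ℝ) ^ (r + 1) * |x| ^ k := by ring

theorem choose_succ_mul_sigma_harm_sub (k r : ℕ) :
    ((k + 1).choose (r + 1) : ℝ) * sigma_harm (k + 1) - (k.choose (r + 1) : ℝ) * sigma_harm k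
      = (k.choose r : ℝ) * sigma_harm k + (k.choose r : ℝ) / (r + 1) := by
  have h : ((k + 1 : ℕ) : ℝ) * k.choose r = ((k + 1).choose (r + 1) : ℝ) * (r + 1) := by
    exact_mod_cast Nat.add_one_mul_choose_eq k r
  have h' : ((k + 1).choose (r + 1) : ℝ) / (k + 1) = k.choose r / (r + 1) := by
    rw [div_eq_div_iff (by positivity) (by positivity)]
    push_cast at h
    linear_combination -h
  rw [sigma_harm_succ, ← h', Nat.choose_succ_succ']
  push_cast
  ring

theorem hasSum_sigma_harm_mul_pow {x : ℝ} (hx : |x| < 1) :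
    HasSum (fun k => sigma_harm k * x ^ k) (-log (1 - x) / (1 - x)) := by
  have hx1 : x ≠ 1 := by rintro rfl; norm_num at hx
  have hV : HasSum (fun k => (sigma_harm (k + 1) - sigma_harm k) * x ^ (k + 1)) (-log (1 - x)) := by
    have e : (fun k => (sigma_harm (k + 1) - sigma_harm k) * x ^ (k + 1))
        = fun k : ℕ => x ^ (k + 1) / (k + 1) :=
      funext fun k => by rw [sigma_harm_succ]; ring
    rw [e]
    exact hasSum_pow_div_log_of_abs_lt_one hx
  have h := hasSum_of_hasSum_coeff_sub hx1
    ((summable_choose_mul_sigma_harm_mul_pow hx 0).congr fun k => by simp) hV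
  rwa [sigma_harm_zero, add_zero] at h

theorem hasSum_choose_mul_sigma_harm_mul_pow {x : ℝ} (hx : |x| < 1) (r : ℕ) :
    HasSum (fun k => (k.choose r : ℝ) * sigma_harm k * x ^ k)
      (x ^ r * (sigma_harm r - log (1 - x)) / (1 - x) ^ (r + 1)) := by
  have hx1 : x ≠ 1 := by rintro rfl; norm_num at hx
  induction r with
  | zero => simpa [sigma_harm_zero] using hasSum_sigma_harm_mul_pow hx
  | succ r ih =>
    have h1x : 1 - x ≠ 0 := sub_ne_zero.2 hx1.symm
    have hV := (ih.mul_left x).add ((hasSum_choose_mul_pow hx r).mul_left (x / (r + 1)))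
    have e : (fun k => x * (k.choose r * sigma_harm k * x ^ k) + x / (r + 1) * (k.choose r * x ^ k))
        = fun k => ((k + 1).choose (r + 1) * sigma_harm (k + 1) - k.choose (r + 1) * sigma_harm k
          : ℝ) * x ^ (k + 1) :=
      funext fun k => by rw [choose_succ_mul_sigma_harm_sub]; ring
    rw [e] at hV
    have h := hasSum_of_hasSum_coeff_sub hx1 (summable_choose_mul_sigma_harm_mul_pow hx _) hV
    have hvalue : x ^ (r + 1) * (sigma_harm (r + 1) - log (1 - x)) / (1 - x) ^ (r + 1 + 1) =
        (x * (x ^ r * (sigma_harm r - log (1 - x)) / (1 - x) ^ (r + 1))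
          + x / (r + 1) * (x ^ r / (1 - x) ^ (r + 1)) + (0 : ℕ).choose (r + 1) * sigma_harm 0)
          / (1 - x) := by
      rw [sigma_harm_succ, sigma_harm_zero]
      field_simp
      ring
    rwa [hvalue]

theorem choose_add_eq_sum_choose_mul_choose (j k : ℕ) :
    (j + k + 1).choose j = ∑ r ∈ range (j + 1), (j + 1).choose (r + 1) * k.choose r := by
  rw [show j + k + 1 = k + (j + 1) by ring, Nat.add_choose_eq,
    Nat.sum_antidiagonal_eq_sum_range_succ fun a b => k.choose a * (j + 1).choose b]
  refine sum_congr rfl fun r hr => ?_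
  have hrj := mem_range.1 hr
  rw [mul_comm, Nat.choose_symm_of_eq_add (by omega : j + 1 = j - r + (r + 1))]

theorem factorial_add_div_factorial_eq_sum (j k : ℕ) :
    ((j + k + 1).factorial : ℝ) / (k + 1).factorial
      = ∑ r ∈ range (j + 1), (j.factorial : ℝ) * (j + 1).choose (r + 1) * k.choose r := by
  have h : ((k + 1 + j).choose j : ℝ) * (k + 1).factorial * j.factorial
      = (k + 1 + j).factorial := by
    exact_mod_cast Nat.add_choose_mul_factorial_mul_factorial (k + 1) j
  rw [show k + 1 + j = j + k + 1 by ring, choose_add_eq_sum_choose_mul_choose] at h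
  rw [← h, mul_right_comm, mul_div_cancel_right₀ _ (by positivity), mul_comm]
  push_cast
  rw [mul_sum]
  refine sum_congr rfl fun r _ => by ring

theorem hasSum_Sj {x : ℝ} (hx : |x| < 1) (j : ℕ) :
    HasSum (fun k => ((j + k + 1).factorial : ℝ) / (k + 1).factorial * sigma_harm k * x ^ k)
      (∑ r ∈ range (j + 1), (j.factorial : ℝ) * (j + 1).choose (r + 1) *
        (x ^ r * (sigma_harm r - log (1 - x)) / (1 - x) ^ (r + 1))) := by
  have h := hasSum_sum fun r (_ : r ∈ range (j + 1)) =>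
    (hasSum_choose_mul_sigma_harm_mul_pow hx r).mul_left
      ((j.factorial : ℝ) * (j + 1).choose (r + 1))
  have e : (fun k => ∑ r ∈ range (j + 1), (j.factorial : ℝ) * (j + 1).choose (r + 1)
      * (k.choose r * sigma_harm k * x ^ k))
      = fun k => ((j + k + 1).factorial : ℝ) / (k + 1).factorial * sigma_harm k * x ^ k := by
    funext k
    rw [factorial_add_div_factorial_eq_sum, sum_mul, sum_mul]
    exact sum_congr rfl fun r _ => by ring
  rwa [e] at h

theorem one_sub_one_sub_pow_eq_sum {R : Type*} [CommRing R] (x : R) (n : ℕ) :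
    1 - (1 - x) ^ (n + 1)
      = ∑ r ∈ range (n + 1), x ^ (r + 1) * (1 - x) ^ (n - r) * ((n + 1).choose (r + 1) : R) := by
  have h := add_pow x (1 - x) (n + 1)
  rw [add_sub_cancel, one_pow, sum_range_succ'] at h
  simp only [Nat.reduceSubDiff, pow_zero, one_mul, Nat.choose_zero_right, Nat.cast_one, mul_one,
    Nat.sub_zero] at h
  linear_combination h

theorem Qpoly_eq_sum (j : ℕ) {x : ℝ} (hx : x ≠ 0) :
    Qpoly j x = -∑ r ∈ range (j + 1),
      (j.factorial : ℝ) * (j + 1).choose (r + 1) * x ^ r * (1 - x) ^ (j - r) := by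
  rw [Qpoly, div_eq_iff hx, one_sub_one_sub_pow_eq_sum, Nat.factorial_succ, mul_sum, mul_sum,
    neg_mul, sum_mul, ← sum_neg_distrib]
  refine sum_congr rfl fun r _ => ?_
  push_cast
  field_simp
  ring

theorem sum_range_succ_eq_sum_range_add_sum_Icc {M : Type*} [AddCommMonoid M] {f : ℕ → M} {j : ℕ}
    (m : ℕ) (hf : ∀ r, j < r → f r = 0) :
    ∑ r ∈ range (j + 1), f r = ∑ r ∈ range m, f r + ∑ r ∈ Icc m j, f r := by
  rw [← sum_union (disjoint_left.2 fun r h₁ h₂ => by simp at h₁ h₂; omega)]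
  exact sum_subset (fun r hr => by simp at hr ⊢; omega) fun r _ hr => hf r (by simpa using hr)

theorem Ppoly_eq_sum (j : ℕ) (x : ℝ) :
    Ppoly j x = ∑ r ∈ range (j + 1),
      (j.factorial : ℝ) * (j + 1).choose (r + 1) * sigma_harm r * x ^ r * (1 - x) ^ (j - r) := by
  set f := fun r =>
    (j.factorial : ℝ) * (j + 1).choose (r + 1) * sigma_harm r * x ^ r * (1 - x) ^ (j - r)
  have hf : ∀ r, j < r → f r = 0 := fun r hr => by
    simp only [f, Nat.choose_eq_zero_of_lt (by omega : j + 1 < r + 1)]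
    simp
  have hfac : ((j + 1).factorial : ℝ) = (j + 1) * j.factorial := by
    push_cast [Nat.factorial_succ]; ring
  have hchoose2 : ((j + 1).choose 2 : ℝ) = (j + 1) * j / 2 := by
    rw [Nat.cast_choose_two]; push_cast; ring
  have hchoose3 : ((j + 1).choose 3 : ℝ) = (j + 1) * j * (j - 1) / 6 := by
    have h : ((j + 1 : ℕ) : ℝ) * j.choose 2 = ((j + 1).choose 3 : ℝ) * 3 := by
      exact_mod_cast Nat.add_one_mul_choose_eq j 2
    rw [Nat.cast_choose_two] at h
    push_cast at h
    linear_combination -h / 3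
  have hIcc : ∀ p ∈ Icc 3 j, f p = ((j + 1).factorial : ℝ) *
      ((j.factorial : ℝ) / ((p + 1).factorial * (j - p).factorial) *
        (1 / (p : ℝ) + 1 / ((p : ℝ) - 1) + ∑ q ∈ Icc 1 (p - 2), 1 / ((p : ℝ) - q - 1)) *
        x ^ p * (1 - x) ^ (j - p)) := by
    intro p hp
    obtain ⟨hp3, hpj⟩ := mem_Icc.1 hp
    rw [one_div_add_one_div_add_sum_eq_sigma_harm (by omega)]
    simp only [f, Nat.cast_choose ℝ (by omega : p + 1 ≤ j + 1), Nat.add_sub_add_right]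
    field_simp
  rw [sum_range_succ_eq_sum_range_add_sum_Icc 3 hf, sum_congr rfl hIcc, ← mul_sum, Ppoly]
  simp only [f, sum_range_succ, sum_range_zero, sigma_harm_zero, sigma_harm_succ, hchoose2, hchoose3,
    hfac]
  push_cast
  ring

/-- Theorem 4 of the paper: for 0 < x < 1 and j ∈ ℕ,
(1-x)^{j+1} S_j(x) = P_j(x) + Q_j(x) log(1-x), where
S_j(x) = Σ_{k=1}^∞ ((j+k+1)!/(k+1)!) σ_k x^k. -/
theorem Sj_closed_form (x : ℝ) (hx0 : 0 < x) (hx1 : x < 1) (j : ℕ) :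
    (1 - x) ^ (j + 1) *
        (∑' k : ℕ, ((Nat.factorial (j + k + 1) : ℝ) / (Nat.factorial (k + 1))) *
          sigma_harm k * x ^ k) =
      Ppoly j x + Qpoly j x * Real.log (1 - x) := by
  have h1x : 1 - x ≠ 0 := sub_ne_zero.2 hx1.ne'
  rw [(hasSum_Sj (abs_lt.2 ⟨by linarith, hx1⟩) j).tsum_eq, Ppoly_eq_sum, Qpoly_eq_sum j hx0.ne',
    mul_sum, neg_mul, sum_mul, ← sub_eq_add_neg, ← sum_sub_distrib]
  refine sum_congr rfl fun r hr => ?_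
  have hpow : (1 - x) ^ (j + 1) = (1 - x) ^ (j - r) * (1 - x) ^ (r + 1) := by
    rw [← pow_add]
    congr 1
    have := mem_range.1 hr
    omega
  rw [hpow]
  field_simp
end

section
/- Let h, g : (0,∞) → ℂ be measurable functions whose Mellin transforms ĥ(z) = ∫_0^∞ h(t) t^{z-1} dt and ĝ(z) = ∫_0^∞ g(t) t^{z-1} dt converge absolutely on suitable vertical strips containing Re z = c and Re z = 1-c respectively, with h·g integrable on (0,∞). Then ∫_0^∞ h(t) g(t) dt = (1/(2πi)) ∫_{Re z = c} ĥ(z) ĝ(1-z) dz (Mellin–Parseval identity), under standard decay hypotheses ensuring absolute convergence of the contour integral. -/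
/-! Substitute the inversion formula for `h` into `∫ h g`, swap the two integrals and recognise the
inner integral as `ĝ(1 - c - iτ)`. Fubini applies because on `(0, ∞) × ℝ` the integrand
`ĥ(c + iτ) g(t) t^{-c-iτ}` has modulus `|ĥ(c + iτ)| · |g(t) t^{-c}|`, a product of integrable
functions. -/

open MeasureTheory Complex Real

/-- The Mellin transform f̂(z) = ∫_0^∞ f(t) t^{z-1} dt. -/
noncomputable def mellinT (f : ℝ → ℂ) (z : ℂ) : ℂ :=
  ∫ t in Set.Ioi (0 : ℝ), f t * (t : ℂ) ^ (z - 1)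

open Set

lemma ae_restrict_prod_fst_mem {α β : Type*} [MeasurableSpace α] [MeasurableSpace β]
    (μ : Measure α) (ν : Measure β) [SFinite μ] [SFinite ν] {s : Set α} (hs : MeasurableSet s) :
    ∀ᵐ p ∂((μ.restrict s).prod ν), p.1 ∈ s := by
  rw [Measure.restrict_prod_eq_prod_univ]
  filter_upwards [ae_restrict_mem (hs.prod MeasurableSet.univ)] with p hp using hp.1

lemma norm_ofReal_cpow_vertical {t : ℝ} (ht : 0 < t) (c τ : ℝ) :
    ‖(t : ℂ) ^ ((c : ℂ) + τ * I)‖ = t ^ c := by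
  simp [norm_cpow_eq_rpow_re_of_pos ht]

lemma Integrable.of_mul_cpow_neg_vertical {F : ℝ → ℂ} {t : ℝ} (ht : 0 < t) {c : ℝ}
    (hF : Integrable (fun τ : ℝ => F τ * (t : ℂ) ^ (-((c : ℂ) + τ * I)))) : Integrable F := by
  have hcont : Continuous fun τ : ℝ => (t : ℂ) ^ ((c : ℂ) + τ * I) :=
    continuous_const.cpow (by fun_prop) fun _ => ofReal_mem_slitPlane.2 ht
  refine (hF.bdd_mul hcont.aestronglyMeasurable
    (ae_of_all _ fun τ => (norm_ofReal_cpow_vertical ht c τ).le)).congr (ae_of_all _ fun τ => ?_)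
  have hne : (t : ℂ) ^ ((c : ℂ) + τ * I) ≠ 0 := by
    rw [← norm_ne_zero_iff, norm_ofReal_cpow_vertical ht]
    exact (rpow_pos_of_pos ht c).ne'
  simp only [cpow_neg]
  field_simp

lemma integrable_prod_mul_cpow_neg_imag {F G : ℝ → ℂ} (hF : Integrable F)
    (hG : IntegrableOn G (Ioi 0)) :
    Integrable (fun p : ℝ × ℝ => F p.2 * (G p.1 * (p.1 : ℂ) ^ (-(p.2 * I))))
      ((volume.restrict (Ioi 0)).prod volume) := by
  have hmeas : AEStronglyMeasurable (fun p : ℝ × ℝ => (p.1 : ℂ) ^ (-(p.2 * I)))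
      ((volume.restrict (Ioi 0)).prod volume) :=
    (by fun_prop : Measurable fun p : ℝ × ℝ => (p.1 : ℂ) ^ (-(p.2 * I))).aestronglyMeasurable
  have hbound : ∀ᵐ p : ℝ × ℝ ∂((volume.restrict (Ioi 0)).prod volume),
      ‖(p.1 : ℂ) ^ (-(p.2 * I))‖ ≤ 1 := by
    filter_upwards [ae_restrict_prod_fst_mem volume volume measurableSet_Ioi] with p hp
    simp [norm_cpow_eq_rpow_re_of_pos hp]
  refine ((hG.mul_prod hF).mul_bdd hmeas hbound).congr (ae_of_all _ fun p => ?_)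
  ring

lemma integral_Ioi_integral_mul_cpow_eq_integral_mul_mellinT {F g : ℝ → ℂ} {c : ℝ}
    (hF : Integrable F) (hg : IntegrableOn (fun t : ℝ => g t * (t : ℂ) ^ (-(c : ℂ))) (Ioi 0)) :
    ∫ t in Ioi 0, ∫ τ : ℝ, F τ * (g t * (t : ℂ) ^ (-((c : ℂ) + τ * I))) =
      ∫ τ : ℝ, F τ * mellinT g (1 - ((c : ℂ) + τ * I)) := by
  have hsplit : ∀ t : ℝ, 0 < t → ∀ τ : ℝ, g t * (t : ℂ) ^ (-((c : ℂ) + τ * I)) =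
      g t * (t : ℂ) ^ (-(c : ℂ)) * (t : ℂ) ^ (-(τ * I)) := fun t ht τ => by
    rw [mul_assoc, ← cpow_add _ _ (ofReal_ne_zero.2 ht.ne'), neg_add]
  have hint : Integrable
      (Function.uncurry fun t τ : ℝ => F τ * (g t * (t : ℂ) ^ (-((c : ℂ) + τ * I))))
      ((volume.restrict (Ioi 0)).prod volume) := by
    refine (integrable_prod_mul_cpow_neg_imag hF hg).congr ?_
    filter_upwards [ae_restrict_prod_fst_mem volume volume measurableSet_Ioi] with p hp
    exact congrArg (F p.2 * ·) (hsplit p.1 hp p.2).symm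
  rw [integral_integral_swap hint]
  refine integral_congr_ae (ae_of_all _ fun τ => ?_)
  simp only [integral_const_mul, mellinT, sub_sub_cancel_left]

theorem mellin_parseval_general (h g : ℝ → ℂ) (c : ℝ)
    (hg : IntegrableOn (fun t : ℝ => g t * (t : ℂ) ^ (-(c : ℂ))) (Set.Ioi 0))
    (hinv : ∀ t ∈ Set.Ioi (0 : ℝ),
      h t = (1 / (2 * (Real.pi : ℂ))) *
        ∫ τ : ℝ, mellinT h ((c : ℂ) + τ * Complex.I) *
          (t : ℂ) ^ (-((c : ℂ) + τ * Complex.I))) :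
    (∫ t in Set.Ioi (0 : ℝ), h t * g t) =
      (1 / (2 * (Real.pi : ℂ))) *
        ∫ τ : ℝ, mellinT h ((c : ℂ) + τ * Complex.I) *
          mellinT g (1 - ((c : ℂ) + τ * Complex.I)) := by
  by_cases hF : Integrable fun τ : ℝ => mellinT h ((c : ℂ) + τ * I)
  · calc (∫ t in Ioi 0, h t * g t)
        = ∫ t in Ioi 0, (1 / (2 * (π : ℂ))) *
            ∫ τ : ℝ, mellinT h ((c : ℂ) + τ * I) * (g t * (t : ℂ) ^ (-((c : ℂ) + τ * I))) :=
          setIntegral_congr_fun measurableSet_Ioi fun t ht => by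
            simp only [hinv t ht, mul_assoc, ← integral_mul_const]
            simp only [mul_comm (g t)]
      _ = _ := by
          rw [integral_const_mul, integral_Ioi_integral_mul_cpow_eq_integral_mul_mellinT hF hg]
  · -- The inversion integral is then the junk value `0`, so `h` vanishes on `(0, ∞)`.
    have hzero : ∀ t ∈ Ioi (0 : ℝ), h t = 0 := fun t ht => by
      rw [hinv t ht, integral_undef fun hI => hF (Integrable.of_mul_cpow_neg_vertical ht hI),
        mul_zero]
    have hmellin : ∀ z, mellinT h z = 0 := fun z =>
      setIntegral_eq_zero_of_forall_eq_zero fun t ht => by rw [hzero t ht, zero_mul]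
    simp only [hmellin, zero_mul, integral_zero, mul_zero]
    exact setIntegral_eq_zero_of_forall_eq_zero fun t ht => by rw [hzero t ht, zero_mul]

/-- The Mellin–Parseval identity: under hypotheses guaranteeing absolute
convergence of the Mellin transforms of h and g on the lines Re z = c and
Re z = 1-c, integrability of h·g, absolute convergence of the contour integral,
and validity of Mellin inversion for h on the line Re z = c, one has
∫_0^∞ h(t) g(t) dt = (1/(2πi)) ∫_{Re z = c} ĥ(z) ĝ(1-z) dz
  = (1/(2π)) ∫_{τ∈ℝ} ĥ(c+iτ) ĝ(1-c-iτ) dτ. -/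
theorem mellin_parseval (h g : ℝ → ℂ) (c : ℝ)
    (hh : IntegrableOn (fun t : ℝ => h t * (t : ℂ) ^ ((c : ℂ) - 1)) (Set.Ioi 0))
    (hg : IntegrableOn (fun t : ℝ => g t * (t : ℂ) ^ (-(c : ℂ))) (Set.Ioi 0))
    (hhg : IntegrableOn (fun t : ℝ => h t * g t) (Set.Ioi 0))
    (hcont : Integrable (fun τ : ℝ =>
      mellinT h ((c : ℂ) + τ * Complex.I) * mellinT g (1 - ((c : ℂ) + τ * Complex.I))))
    (hinv : ∀ t ∈ Set.Ioi (0 : ℝ),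
      h t = (1 / (2 * (Real.pi : ℂ))) *
        ∫ τ : ℝ, mellinT h ((c : ℂ) + τ * Complex.I) *
          (t : ℂ) ^ (-((c : ℂ) + τ * Complex.I))) :
    (∫ t in Set.Ioi (0 : ℝ), h t * g t) =
      (1 / (2 * (Real.pi : ℂ))) *
        ∫ τ : ℝ, mellinT h ((c : ℂ) + τ * Complex.I) *
          mellinT g (1 - ((c : ℂ) + τ * Complex.I)) :=
  mellin_parseval_general h g c hg hinv
end
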